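/- arXiv:2212.05460 — 4 statements merged into one kernel-verified Lean document; each statement's English description precedes it below -/
import Mathlib

section
/- Let A > 0 and suppose h is a real root of h^3 - A*h + (B - x) = 0 satisfying |B - x| > (2*sqrt(3)/9)*A^(3/2) (so h is the unique real root). Then h has the same sign as x - B, and h^2 - A > 0, i.e. h^2 > A. -/
/-! A real root `h` of `h³ - A h + c = 0` satisfies `c = h (A - h²)`, so
`27 c² - 4 A³ = (3h² - A)² (3h² - 4A)`. When the discriminant condition `27 c² > 4 A³` holds,
which is the squared form of `|c| > (2√3/9) A^(3/2)`, the right side must be positive, forcing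
`h² > A`. Then `-c h = h² (h² - A) > 0`. -/

namespace DepressedCubic

variable {A c h : ℝ}

lemma four_mul_pow_three_lt_of_abs_gt (hA : 0 ≤ A)
    (hc : 2 * Real.sqrt 3 / 9 * A ^ ((3 : ℝ) / 2) < |c|) : 4 * A ^ 3 < 27 * c ^ 2 := by
  have hsq : (2 * Real.sqrt 3 / 9 * A ^ ((3 : ℝ) / 2)) ^ 2 = 4 / 27 * A ^ 3 := by
    rw [mul_pow, ← Real.rpow_mul_natCast hA, div_pow, mul_pow, Real.sq_sqrt zero_le_three]
    norm_num
  have hlt := pow_lt_pow_left₀ hc (by positivity) two_ne_zero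
  rw [hsq, sq_abs] at hlt
  linarith

lemma lt_sq_of_root (hdisc : 4 * A ^ 3 < 27 * c ^ 2) (hroot : h ^ 3 - A * h + c = 0) :
    A < h ^ 2 := by
  by_contra! hle
  have hc : c = h * (A - h ^ 2) := by linear_combination hroot
  have hfactor : 27 * c ^ 2 - 4 * A ^ 3 = (3 * h ^ 2 - A) ^ 2 * (3 * h ^ 2 - 4 * A) := by
    rw [hc]; ring
  have hnonpos : (3 * h ^ 2 - A) ^ 2 * (3 * h ^ 2 - 4 * A) ≤ 0 :=
    mul_nonpos_of_nonneg_of_nonpos (sq_nonneg _) (by nlinarith [sq_nonneg h])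
  linarith

lemma neg_mul_pos_of_root (hA : 0 ≤ A) (hlt : A < h ^ 2) (hroot : h ^ 3 - A * h + c = 0) :
    0 < -c * h := by
  have hneg : -c * h = h ^ 2 * (h ^ 2 - A) := by linear_combination -h * hroot
  rw [hneg]
  exact mul_pos (hA.trans_lt hlt) (sub_pos.mpr hlt)

end DepressedCubic

open DepressedCubic in
/-- if h is the unique real root of h^3 - A h + (B-x) = 0 (i.e.
|B-x| > (2√3/9)A^(3/2)), then h has the same sign as x - B and h² > A. -/
theorem stmt2 (A B x h : ℝ) (hA : 0 < A)
    (hroot : h ^ 3 - A * h + (B - x) = 0)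
    (hBx : |B - x| > (2 * Real.sqrt 3 / 9) * A ^ ((3 : ℝ) / 2)) :
    (x - B) * h > 0 ∧ h ^ 2 - A > 0 := by
  have hlt : A < h ^ 2 := lt_sq_of_root (four_mul_pow_three_lt_of_abs_gt hA.le hBx) hroot
  have hsign := neg_mul_pos_of_root hA.le hlt hroot
  rw [neg_sub] at hsign
  exact ⟨hsign, sub_pos.mpr hlt⟩
end

section
/- Let d > 0 and let A, c, h be real numbers with A ≥ 0, h ≠ 0, h^3 - A*h + c = 0, h^2 ≥ A, and suppose there are constants C1, C2 > 0 with C1 * d^(1/6) ≤ |h| ≤ C2 * d^(1/6) and c^2 + A^3 ≥ d. Then 3*h^2 - A ≥ (1/C2) * d^(1/3) * (c^2 + A^3)^(1/2) / d^(1/2) ≥ (1/C2) * d^(1/3). -/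
/-!
Writing `x = h²`, the cubic gives `c² = x (x - A)²`, and `c² + A³ ≤ x³` reduces to
`A (A - x) (A + 2x) ≤ 0`. Hence `√(c² + A³) ≤ |h|³ = h² |h|`, and the upper bound on `|h|`
turns `h² ≤ 3h² - A` into the first inequality; the second is `d ≤ c² + A³`.
-/

open Real

lemma sq_add_cube_le_pow_six_of_cubic_eq_zero {A c h : ℝ} (hA : 0 ≤ A) (hsq : A ≤ h ^ 2)
    (hroot : h ^ 3 - A * h + c = 0) : c ^ 2 + A ^ 3 ≤ h ^ 6 := by
  have hc : c ^ 2 = h ^ 2 * (h ^ 2 - A) ^ 2 := by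
    rw [show c = -(h * (h ^ 2 - A)) by linear_combination hroot]; ring
  have hfactor : A * (A - h ^ 2) * (A + 2 * h ^ 2) ≤ 0 :=
    mul_nonpos_of_nonpos_of_nonneg (mul_nonpos_of_nonneg_of_nonpos hA (by linarith))
      (by positivity)
  nlinarith

lemma sqrt_sq_add_cube_le_abs_pow_three {A c h : ℝ} (hA : 0 ≤ A) (hsq : A ≤ h ^ 2)
    (hroot : h ^ 3 - A * h + c = 0) : (c ^ 2 + A ^ 3) ^ ((1 : ℝ) / 2) ≤ |h| ^ 3 := by
  rw [← sqrt_eq_rpow, ← sqrt_sq (by positivity : 0 ≤ |h| ^ 3)]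
  refine sqrt_le_sqrt ?_
  rw [← pow_mul, pow_abs, abs_of_nonneg (by positivity : (0 : ℝ) ≤ h ^ 6)]
  exact sq_add_cube_le_pow_six_of_cubic_eq_zero hA hsq hroot

lemma rpow_half_eq_rpow_third_mul_rpow_sixth {d : ℝ} (hd : 0 < d) :
    d ^ ((1 : ℝ) / 2) = d ^ ((1 : ℝ) / 3) * d ^ ((1 : ℝ) / 6) := by
  rw [← rpow_add hd]; norm_num

theorem stmt4_general (d A c h C2 : ℝ) (hd : 0 < d) (hA : 0 ≤ A)
    (hroot : h ^ 3 - A * h + c = 0) (hsq : A ≤ h ^ 2)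
    (hup : |h| ≤ C2 * d ^ ((1 : ℝ) / 6))
    (hden : d ≤ c ^ 2 + A ^ 3) :
    3 * h ^ 2 - A ≥
      (1 / C2) * d ^ ((1 : ℝ) / 3) * (c ^ 2 + A ^ 3) ^ ((1 : ℝ) / 2) / d ^ ((1 : ℝ) / 2) ∧
    (1 / C2) * d ^ ((1 : ℝ) / 3) * (c ^ 2 + A ^ 3) ^ ((1 : ℝ) / 2) / d ^ ((1 : ℝ) / 2) ≥
      (1 / C2) * d ^ ((1 : ℝ) / 3) := by
  have hd6 : 0 < d ^ ((1 : ℝ) / 6) := rpow_pos_of_pos hd _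
  have hC2 : 0 ≤ C2 := nonneg_of_mul_nonneg_left ((abs_nonneg h).trans hup) hd6
  set s := (c ^ 2 + A ^ 3) ^ ((1 : ℝ) / 2)
  have hs : (1 / C2) * d ^ ((1 : ℝ) / 3) * s / d ^ ((1 : ℝ) / 2) =
      s / (C2 * d ^ ((1 : ℝ) / 6)) := by
    rw [rpow_half_eq_rpow_third_mul_rpow_sixth hd]; field_simp
  have hh2 : h ^ 2 ≤ 3 * h ^ 2 - A := by linarith [sq_nonneg h]
  constructor
  · rw [hs, ge_iff_le]
    refine div_le_of_le_mul₀ (by positivity) ((sq_nonneg h).trans hh2) ?_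
    calc s ≤ h ^ 2 * |h| := by
          rw [← sq_abs h, ← pow_succ]; exact sqrt_sq_add_cube_le_abs_pow_three hA hsq hroot
      _ ≤ (3 * h ^ 2 - A) * (C2 * d ^ ((1 : ℝ) / 6)) :=
          mul_le_mul hh2 hup (abs_nonneg h) ((sq_nonneg h).trans hh2)
  · rw [ge_iff_le, le_div_iff₀ (rpow_pos_of_pos hd _)]
    gcongr
    exact rpow_le_rpow hd.le hden (by norm_num)

/-- lower bound 3h² - A ≥ (1/C2) d^(1/3) (c²+A³)^(1/2) / d^(1/2) ≥ (1/C2) d^(1/3). -/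
theorem stmt4 (d A c h C1 C2 : ℝ) (hd : 0 < d) (hA : 0 ≤ A) (hh : h ≠ 0)
    (hC1 : 0 < C1) (hC2 : 0 < C2)
    (hroot : h ^ 3 - A * h + c = 0) (hsq : A ≤ h ^ 2)
    (hlow : C1 * d ^ ((1 : ℝ) / 6) ≤ |h|) (hup : |h| ≤ C2 * d ^ ((1 : ℝ) / 6))
    (hden : d ≤ c ^ 2 + A ^ 3) :
    3 * h ^ 2 - A ≥
      (1 / C2) * d ^ ((1 : ℝ) / 3) * (c ^ 2 + A ^ 3) ^ ((1 : ℝ) / 2) / d ^ ((1 : ℝ) / 2) ∧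
    (1 / C2) * d ^ ((1 : ℝ) / 3) * (c ^ 2 + A ^ 3) ^ ((1 : ℝ) / 2) / d ^ ((1 : ℝ) / 2) ≥
      (1 / C2) * d ^ ((1 : ℝ) / 3) :=
  stmt4_general d A c h C2 hd hA hroot hsq hup hden
end

section
/- Under the assumptions of the monotonicity lemma (Q' ≤ -C0 ε R + C1 ε² R L, L' ≤ C1 ε R, all functions nonnegative, ε ≤ 1), if additionally Q(t0) ≤ (ε/2)*L(t0)^2 and C1*ε*L(t0) ≤ C0/3 and L(t) ≤ 2C0/(3C1) on [t0,t1], then L(t) ≤ (3/2)*L(t0) for all t in [t0, t1]. -/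
/-!
The combination `3 C₁ Q + C₀ L` is nonincreasing: its derivative is at most
`C₁ ε R (3 C₁ ε L - 2 C₀)`, which is `≤ 0` as long as `L ≤ 2 C₀ / (3 C₁)`. Hence
`C₀ L(t) ≤ 3 C₁ Q(t₀) + C₀ L(t₀) ≤ (3 C₁ ε / 2) L(t₀)² + C₀ L(t₀) ≤ (3/2) C₀ L(t₀)`.
-/

open Set

theorem antitoneOn_of_forall_hasDerivWithinAt_nonpos {D : Set ℝ} (hD : Convex ℝ D)
    {f f' : ℝ → ℝ} (hf : ∀ x ∈ D, HasDerivWithinAt f (f' x) D x) (hf' : ∀ x ∈ D, f' x ≤ 0) :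
    AntitoneOn f D :=
  antitoneOn_of_hasDerivWithinAt_nonpos hD (HasDerivWithinAt.continuousOn hf)
    (fun x hx => (hf x (interior_subset hx)).mono interior_subset)
    (fun x hx => hf' x (interior_subset hx))

theorem lyapunov_deriv_nonpos {C0 C1 ε r l q' l' : ℝ} (hC0 : 0 ≤ C0) (hC1 : 0 < C1) (hε : 0 < ε)
    (hε1 : ε ≤ 1) (hr : 0 ≤ r) (hl : 0 ≤ l)
    (hq' : q' ≤ -C0 * ε * r + C1 * ε ^ 2 * r * l) (hl' : l' ≤ C1 * ε * r)
    (hlb : l ≤ 2 * C0 / (3 * C1)) :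
    3 * C1 * q' + C0 * l' ≤ 0 := by
  have hlb' : 3 * C1 * (ε * l) ≤ 2 * C0 :=
    calc 3 * C1 * (ε * l) ≤ 3 * C1 * l := by gcongr; nlinarith
      _ ≤ 2 * C0 := by rwa [le_div_iff₀' (by positivity)] at hlb
  calc 3 * C1 * q' + C0 * l'
      ≤ 3 * C1 * (-C0 * ε * r + C1 * ε ^ 2 * r * l) + C0 * (C1 * ε * r) := by gcongr
    _ = -(C1 * ε * r) * (2 * C0 - 3 * C1 * (ε * l)) := by ring
    _ ≤ 0 := by
      have : 0 ≤ C1 * ε * r := by positivity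
      nlinarith

theorem stmt8_general (t0 t1 C0 C1 ε : ℝ) (hC0 : 0 < C0) (hC1 : 0 < C1)
    (hε : 0 < ε) (hε1 : ε ≤ 1)
    (L Q R L' Q' : ℝ → ℝ)
    (hLpos : ∀ t ∈ Set.Icc t0 t1, 0 ≤ L t)
    (hQpos : ∀ t ∈ Set.Icc t0 t1, 0 ≤ Q t)
    (hRpos : ∀ t ∈ Set.Icc t0 t1, 0 ≤ R t)
    (hQd : ∀ t ∈ Set.Icc t0 t1, HasDerivWithinAt Q (Q' t) (Set.Icc t0 t1) t)
    (hLd : ∀ t ∈ Set.Icc t0 t1, HasDerivWithinAt L (L' t) (Set.Icc t0 t1) t)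
    (hQ' : ∀ t ∈ Set.Icc t0 t1, Q' t ≤ -C0 * ε * R t + C1 * ε ^ 2 * R t * L t)
    (hL' : ∀ t ∈ Set.Icc t0 t1, L' t ≤ C1 * ε * R t)
    (hLb : ∀ t ∈ Set.Icc t0 t1, L t ≤ 2 * C0 / (3 * C1))
    (hQ0 : Q t0 ≤ ε / 2 * (L t0) ^ 2)
    (hL0 : C1 * ε * L t0 ≤ C0 / 3) :
    ∀ t ∈ Set.Icc t0 t1, L t ≤ 3 / 2 * L t0 := by
  have hanti : AntitoneOn (fun t => 3 * C1 * Q t + C0 * L t) (Icc t0 t1) :=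
    antitoneOn_of_forall_hasDerivWithinAt_nonpos (convex_Icc t0 t1)
      (fun t ht => ((hQd t ht).const_mul _).add ((hLd t ht).const_mul _))
      (fun t ht => lyapunov_deriv_nonpos hC0.le hC1 hε hε1 (hRpos t ht) (hLpos t ht) (hQ' t ht)
        (hL' t ht) (hLb t ht))
  intro t ht
  have ht0 : t0 ∈ Icc t0 t1 := left_mem_Icc.2 (ht.1.trans ht.2)
  have hL0pos := hLpos t0 ht0
  have hdecr : 3 * C1 * Q t + C0 * L t ≤ 3 * C1 * Q t0 + C0 * L t0 := hanti ht0 ht ht.1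
  have hQt : 0 ≤ 3 * C1 * Q t := by have := hQpos t ht; positivity
  have hC0L : C0 * L t ≤ C0 * (3 / 2 * L t0) :=
    calc C0 * L t ≤ 3 * C1 * Q t0 + C0 * L t0 := by linarith
      _ ≤ 3 * C1 * (ε / 2 * L t0 ^ 2) + C0 * L t0 := by gcongr
      _ = 3 / 2 * L t0 * (C1 * ε * L t0) + C0 * L t0 := by ring
      _ ≤ 3 / 2 * L t0 * (C0 / 3) + C0 * L t0 := by gcongr
      _ = C0 * (3 / 2 * L t0) := by ring
  exact le_of_mul_le_mul_left hC0L hC0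

/-- under the monotonicity assumptions together with
Q(t0) ≤ (ε/2)L(t0)² and C₁εL(t0) ≤ C₀/3, one gets L(t) ≤ (3/2)L(t0). -/
theorem stmt8 (t0 t1 C0 C1 ε : ℝ) (ht : t0 < t1) (hC0 : 0 < C0) (hC1 : 0 < C1)
    (hε : 0 < ε) (hε1 : ε ≤ 1)
    (L Q R L' Q' : ℝ → ℝ)
    (hLc : ContinuousOn L (Set.Icc t0 t1)) (hQc : ContinuousOn Q (Set.Icc t0 t1))
    (hRc : ContinuousOn R (Set.Icc t0 t1))
    (hLpos : ∀ t ∈ Set.Icc t0 t1, 0 ≤ L t)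
    (hQpos : ∀ t ∈ Set.Icc t0 t1, 0 ≤ Q t)
    (hRpos : ∀ t ∈ Set.Icc t0 t1, 0 ≤ R t)
    (hQd : ∀ t ∈ Set.Icc t0 t1, HasDerivWithinAt Q (Q' t) (Set.Icc t0 t1) t)
    (hLd : ∀ t ∈ Set.Icc t0 t1, HasDerivWithinAt L (L' t) (Set.Icc t0 t1) t)
    (hQ' : ∀ t ∈ Set.Icc t0 t1, Q' t ≤ -C0 * ε * R t + C1 * ε ^ 2 * R t * L t)
    (hL' : ∀ t ∈ Set.Icc t0 t1, L' t ≤ C1 * ε * R t)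
    (hLb : ∀ t ∈ Set.Icc t0 t1, L t ≤ 2 * C0 / (3 * C1))
    (hQ0 : Q t0 ≤ ε / 2 * (L t0) ^ 2)
    (hL0 : C1 * ε * L t0 ≤ C0 / 3) :
    ∀ t ∈ Set.Icc t0 t1, L t ≤ 3 / 2 * L t0 :=
  stmt8_general t0 t1 C0 C1 ε hC0 hC1 hε hε1 L Q R L' Q' hLpos hQpos hRpos hQd hLd hQ' hL' hLb hQ0
    hL0
end

section
/- Let y(t) = y0 + k0*sqrt(t-T) + O(t-T) with k0 > 0 for t > T near T, and let φ be C³ with ∂_y φ(y0,T) = 0, ∂²_y φ(y0,T) = 0, ∂²_{yt} φ(y0,T) = -1, ∂³_y φ(y0,T) = 6. Then ∂_y φ(y(t), t) = (3*k0^2 - 1)*(t-T) + o(t-T) as t → T+; in particular if k0 > 1/sqrt(3), then ∂_y φ(y(t), t) > 0 for t sufficiently close to T from above. -/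
/-!
Put `ψ(a, t) = ∂_y φ(a, t)`, a `C²` function, and split `ψ(y, t) = [ψ(y, t) - ψ(y, T)] + ψ(y, T)`.
Strict differentiability of `ψ` at `(y0, T)` makes the bracket `∂_t ψ(y0, T) (t - T) + o(t - T)`,
uniformly for `y` near `y0`. Taylor's theorem for `ψ(·, T)` gives
`ψ(y, T) = 3 (y - y0)² + o((y - y0)²)`, and `y - y0 = k0 √(t - T) + O(t - T)` gives
`(y - y0)² = k0² (t - T) + o(t - T)`.
-/

open Filter Topology Asymptotics

variable {E F : Type*} [NormedAddCommGroup E] [NormedSpace ℝ E]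
  [NormedAddCommGroup F] [NormedSpace ℝ F]

theorem deriv_slice_snd {f : ℝ × ℝ → E} {a b : ℝ} (hf : DifferentiableAt ℝ f (a, b)) :
    deriv (fun y => f (a, y)) b = fderiv ℝ f (a, b) (0, 1) :=
  (hf.hasFDerivAt.comp_hasDerivAt b ((hasDerivAt_const b a).prodMk (hasDerivAt_id b))).deriv

theorem contDiff_deriv_slice_fst {φ : ℝ → ℝ → E} {m n : WithTop ℕ∞}
    (hφ : ContDiff ℝ n (fun p : ℝ × ℝ => φ p.1 p.2)) (hmn : m + 1 ≤ n) :
    ContDiff ℝ m (fun p : ℝ × ℝ => deriv (fun x => φ x p.2) p.1) := by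
  have hdiff : Differentiable ℝ (fun p : ℝ × ℝ => φ p.1 p.2) :=
    hφ.differentiable (zero_lt_one.trans_le (le_add_self.trans hmn)).ne'
  have : (fun p : ℝ × ℝ => deriv (fun x => φ x p.2) p.1) =
      fun p => fderiv ℝ (fun p : ℝ × ℝ => φ p.1 p.2) p (1, 0) := by
    funext ⟨a, b⟩
    exact ((hdiff (a, b)).hasFDerivAt.comp_hasDerivAt a
      ((hasDerivAt_id a).prodMk (hasDerivAt_const a b))).deriv
  rw [this]
  exact (hφ.fderiv_right hmn).clm_apply contDiff_const

theorem ContDiff.isLittleO_sub_taylor_two {f : ℝ → E} {x₀ : ℝ} (hf : ContDiff ℝ 2 f) :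
    (fun x => f x - f x₀ - (x - x₀) • deriv f x₀ - ((x - x₀) ^ 2 / 2) • iteratedDeriv 2 f x₀)
      =o[𝓝 x₀] fun x => (x - x₀) ^ 2 := by
  convert taylor_isLittleO_univ hf using 2 with x
  simp only [taylorWithinEval_succ, taylor_within_zero_eval, iteratedDerivWithin_univ]
  norm_num [div_eq_inv_mul]
  abel

theorem HasStrictFDerivAt.isLittleO_increment_snd {f : E × ℝ → F} {f' : E × ℝ →L[ℝ] F}
    {x₀ : E} {t₀ : ℝ} (hf : HasStrictFDerivAt f f' (x₀, t₀)) {l : Filter ℝ} {a : ℝ → E}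
    (ha : Tendsto a l (𝓝 x₀)) (hl : l ≤ 𝓝 t₀) :
    (fun t => f (a t, t) - f (a t, t₀) - (t - t₀) • f' (0, 1)) =o[l] fun t => t - t₀ := by
  have hp : Tendsto (fun t => ((a t, t), (a t, t₀))) l (𝓝 ((x₀, t₀), (x₀, t₀))) :=
    (ha.prodMk_nhds hl).prodMk_nhds (ha.prodMk_nhds tendsto_const_nhds)
  have h := (hasStrictFDerivAt_iff_isLittleO.mp hf).comp_tendsto hp
  refine (h.trans_isBigO (isBigO_of_le _ fun t => ?_)).congr_left fun t => ?_
  · simp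
  · simp [← map_smul, -map_sub]

theorem eventually_pos_of_isLittleO_sub_mul {f : ℝ → ℝ} {c T : ℝ} (hc : 0 < c)
    (hf : (fun t => f t - c * (t - T)) =o[𝓝[>] T] fun t => t - T) :
    ∀ᶠ t in 𝓝[>] T, 0 < f t := by
  filter_upwards [hf.def (half_pos hc), self_mem_nhdsWithin] with t ht (hTt : T < t)
  rw [Real.norm_eq_abs, Real.norm_eq_abs, abs_of_pos (sub_pos.2 hTt)] at ht
  nlinarith [neg_abs_le (f t - c * (t - T))]

theorem ContDiff.isLittleO_deriv_sub_half_mul_sq {f : ℝ → ℝ} {x₀ c : ℝ} (hf : ContDiff ℝ 3 f)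
    (h2 : iteratedDeriv 2 f x₀ = 0) (h3 : iteratedDeriv 3 f x₀ = c) :
    (fun x => deriv f x - deriv f x₀ - c / 2 * (x - x₀) ^ 2) =o[𝓝 x₀] fun x => (x - x₀) ^ 2 := by
  rw [iteratedDeriv_succ', iteratedDeriv_one] at h2
  rw [iteratedDeriv_succ'] at h3
  refine (hf.deriv' (n := 2)).isLittleO_sub_taylor_two.congr_left fun x => ?_
  rw [h2, h3, smul_eq_mul, smul_eq_mul]
  ring

section SqrtProfile

variable {u : ℝ → ℝ} {k T : ℝ}

theorem isBigO_nhdsGT_of_eventually_abs_le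
    (h : ∃ C : ℝ, ∀ᶠ t in 𝓝[>] T, |u t| ≤ C * (t - T)) : u =O[𝓝[>] T] fun t => t - T := by
  obtain ⟨C, hC⟩ := h
  refine isBigO_iff.mpr ⟨C, ?_⟩
  filter_upwards [hC, self_mem_nhdsWithin] with t ht (hTt : T < t)
  rwa [Real.norm_eq_abs, Real.norm_eq_abs, abs_of_pos (sub_pos.2 hTt)]

theorem tendsto_sub_nhdsGT_zero (T : ℝ) : Tendsto (fun t => t - T) (𝓝[>] T) (𝓝 0) :=
  tendsto_sub_nhds_zero_iff.mpr nhdsWithin_le_nhds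

theorem tendsto_sqrt_sub_nhdsGT_zero (T : ℝ) : Tendsto (fun t => √(t - T)) (𝓝[>] T) (𝓝 0) := by
  simpa [Function.comp_def] using (Real.continuous_sqrt.tendsto 0).comp (tendsto_sub_nhdsGT_zero T)

theorem tendsto_zero_of_isBigO_sub_sqrt
    (hu : (fun t => u t - k * √(t - T)) =O[𝓝[>] T] fun t => t - T) :
    Tendsto u (𝓝[>] T) (𝓝 0) := by
  simpa using (hu.trans_tendsto (tendsto_sub_nhdsGT_zero T)).add
    ((tendsto_sqrt_sub_nhdsGT_zero T).const_mul k)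

theorem isLittleO_sq_sub_of_isBigO_sub_sqrt
    (hu : (fun t => u t - k * √(t - T)) =O[𝓝[>] T] fun t => t - T) :
    (fun t => u t ^ 2 - k ^ 2 * (t - T)) =o[𝓝[>] T] fun t => t - T := by
  set e := fun t => u t - k * √(t - T)
  have he : e =o[𝓝[>] T] fun _ => (1 : ℝ) :=
    isLittleO_one_iff ℝ |>.mpr (hu.trans_tendsto (tendsto_sub_nhdsGT_zero T))
  have hs : (fun t => √(t - T)) =o[𝓝[>] T] fun _ => (1 : ℝ) :=
    isLittleO_one_iff ℝ |>.mpr (tendsto_sqrt_sub_nhdsGT_zero T)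
  have hsum := (he.mul_isBigO hu).add ((hs.mul_isBigO hu).const_mul_left (2 * k))
  simp only [one_mul] at hsum
  refine hsum.congr' ?_ EventuallyEq.rfl
  filter_upwards [self_mem_nhdsWithin] with t (hTt : T < t)
  have hsq : √(t - T) ^ 2 = t - T := Real.sq_sqrt (sub_pos.2 hTt).le
  simp only [e]
  linear_combination (-k ^ 2) * hsq

theorem isBigO_sq_of_isBigO_sub_sqrt
    (hu : (fun t => u t - k * √(t - T)) =O[𝓝[>] T] fun t => t - T) :
    (fun t => u t ^ 2) =O[𝓝[>] T] fun t => t - T :=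
  ((isLittleO_sq_sub_of_isBigO_sub_sqrt hu).isBigO.add
    ((isBigO_refl _ _).const_mul_left (k ^ 2))).congr_left fun t => by ring

end SqrtProfile

theorem stmt15_general (y0 T k0 : ℝ) (φ : ℝ → ℝ → ℝ) (y : ℝ → ℝ)
    (hφ : ContDiff ℝ 3 (fun p : ℝ × ℝ => φ p.1 p.2))
    (h1 : deriv (fun y' => φ y' T) y0 = 0)
    (h2 : iteratedDeriv 2 (fun y' => φ y' T) y0 = 0)
    (h3 : deriv (fun t => deriv (fun y' => φ y' t) y0) T = -1)
    (h4 : iteratedDeriv 3 (fun y' => φ y' T) y0 = 6)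
    (hy : ∃ C : ℝ, ∀ᶠ t in 𝓝[>] T, |y t - y0 - k0 * Real.sqrt (t - T)| ≤ C * (t - T)) :
    (fun t => deriv (fun y' => φ y' t) (y t) - (3 * k0 ^ 2 - 1) * (t - T))
      =o[𝓝[>] T] (fun t => t - T) ∧
    (1 / Real.sqrt 3 < k0 → ∀ᶠ t in 𝓝[>] T, 0 < deriv (fun y' => φ y' t) (y t)) := by
  let ψ : ℝ × ℝ → ℝ := fun p => deriv (fun x => φ x p.2) p.1
  have hψ : ContDiff ℝ 2 ψ := contDiff_deriv_slice_fst hφ (by norm_num)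
  have hψt : fderiv ℝ ψ (y0, T) (0, 1) = -1 := by
    rw [← deriv_slice_snd (hψ.differentiable two_ne_zero _)]
    exact h3
  have hφT : ContDiff ℝ 3 fun x => φ x T := hφ.comp (contDiff_id.prodMk contDiff_const)
  have hg : (fun x => ψ (x, T) - 3 * (x - y0) ^ 2) =o[𝓝 y0] fun x => (x - y0) ^ 2 :=
    (hφT.isLittleO_deriv_sub_half_mul_sq h2 h4).congr_left fun x => by rw [h1]; ring
  have hu := isBigO_nhdsGT_of_eventually_abs_le hy
  have hyT : Tendsto y (𝓝[>] T) (𝓝 y0) :=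
    tendsto_sub_nhds_zero_iff.mp (tendsto_zero_of_isBigO_sub_sqrt hu)
  have hsq := isLittleO_sq_sub_of_isBigO_sub_sqrt hu
  have hslice := (hψ.hasStrictFDerivAt two_ne_zero).isLittleO_increment_snd hyT nhdsWithin_le_nhds
  have main : (fun t => deriv (fun y' => φ y' t) (y t) - (3 * k0 ^ 2 - 1) * (t - T))
      =o[𝓝[>] T] fun t => t - T := by
    refine ((hslice.add ((hg.comp_tendsto hyT).trans_isBigO (isBigO_sq_of_isBigO_sub_sqrt hu))).add
      (hsq.const_mul_left 3)).congr_left fun t => ?_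
    simp only [hψt, Function.comp_apply, smul_eq_mul, ψ]
    ring
  refine ⟨main, fun hk => eventually_pos_of_isLittleO_sub_mul ?_ main⟩
  have hk2 : (1 / √3) ^ 2 < k0 ^ 2 := pow_lt_pow_left₀ hk (by positivity) two_ne_zero
  rw [div_pow, one_pow, Real.sq_sqrt (by norm_num)] at hk2
  linarith

/-- along y(t) = y0 + k0√(t-T) + O(t-T), the derivative
∂_y φ(y(t), t) equals (3k0² - 1)(t-T) + o(t-T); if k0 > 1/√3 it is eventually positive. -/
theorem stmt15 (y0 T k0 : ℝ) (hk0 : 0 < k0) (φ : ℝ → ℝ → ℝ) (y : ℝ → ℝ)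
    (hφ : ContDiff ℝ 3 (fun p : ℝ × ℝ => φ p.1 p.2))
    (h1 : deriv (fun y' => φ y' T) y0 = 0)
    (h2 : iteratedDeriv 2 (fun y' => φ y' T) y0 = 0)
    (h3 : deriv (fun t => deriv (fun y' => φ y' t) y0) T = -1)
    (h4 : iteratedDeriv 3 (fun y' => φ y' T) y0 = 6)
    (hy : ∃ C : ℝ, ∀ᶠ t in 𝓝[>] T, |y t - y0 - k0 * Real.sqrt (t - T)| ≤ C * (t - T)) :
    (fun t => deriv (fun y' => φ y' t) (y t) - (3 * k0 ^ 2 - 1) * (t - T))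
      =o[𝓝[>] T] (fun t => t - T) ∧
    (1 / Real.sqrt 3 < k0 → ∀ᶠ t in 𝓝[>] T, 0 < deriv (fun y' => φ y' t) (y t)) :=
  stmt15_general y0 T k0 φ y hφ h1 h2 h3 h4 hy
end
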